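/- In the lattice D_16^+ = D_16 + ℤ·(1/2)(e_1+...+e_16), every vector of squared length 2 lies in ℤ^16; hence the roots of D_16^+ are exactly the 480 vectors ±e_i ± e_j with 1 ≤ i < j ≤ 16. -/
import Mathlib

/-- coordinate of `a•e_i + b•e_j` -/
lemma D16aux_coord (i j m : Fin 16) (a b : ℚ) :
    (a • (Pi.single i (1 : ℚ) : Fin 16 → ℚ) + b • (Pi.single j (1 : ℚ) : Fin 16 → ℚ)) m
      = (if m = i then a else 0) + (if m = j then b else 0) := by
  simp [Pi.single_apply, mul_ite, mul_one, mul_zero]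

lemma D16aux_sumsq (i j : Fin 16) (hij : i ≠ j) (a b : ℚ) :
    ∑ m, (a • (Pi.single i (1 : ℚ) : Fin 16 → ℚ) + b • (Pi.single j (1 : ℚ) : Fin 16 → ℚ)) m *
         (a • (Pi.single i (1 : ℚ) : Fin 16 → ℚ) + b • (Pi.single j (1 : ℚ) : Fin 16 → ℚ)) m
      = a * a + b * b := by
  have h1 : ∀ m : Fin 16,
      (a • (Pi.single i (1 : ℚ) : Fin 16 → ℚ) + b • (Pi.single j (1 : ℚ) : Fin 16 → ℚ)) m *
      (a • (Pi.single i (1 : ℚ) : Fin 16 → ℚ) + b • (Pi.single j (1 : ℚ) : Fin 16 → ℚ)) m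
        = (if m = i then a * a else 0) + (if m = j then b * b else 0) := by
    intro m
    rw [D16aux_coord]
    by_cases h : m = i
    · subst h
      rw [if_pos rfl, if_pos rfl, if_neg hij, if_neg hij]
      ring
    · by_cases h' : m = j
      · subst h'
        rw [if_neg h, if_neg h, if_pos rfl, if_pos rfl]
        ring
      · rw [if_neg h, if_neg h, if_neg h', if_neg h']
        ring
  rw [Finset.sum_congr rfl (fun m _ => h1 m), Finset.sum_add_distrib,
    Finset.sum_ite_eq' Finset.univ i (fun _ => a * a),
    Finset.sum_ite_eq' Finset.univ j (fun _ => b * b)]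
  simp

lemma D16aux_sumcoord (i j : Fin 16) (a b : ℚ) :
    ∑ m, (a • (Pi.single i (1 : ℚ) : Fin 16 → ℚ) + b • (Pi.single j (1 : ℚ) : Fin 16 → ℚ)) m
      = a + b := by
  rw [Finset.sum_congr rfl (fun m _ => D16aux_coord i j m a b), Finset.sum_add_distrib,
    Finset.sum_ite_eq' Finset.univ i (fun _ => a),
    Finset.sum_ite_eq' Finset.univ j (fun _ => b)]
  simp

set_option maxRecDepth 20000 in
lemma D16aux_pairs : (Finset.univ.filter (fun p : Fin 16 × Fin 16 => p.1 < p.2)).card = 120 := by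
  decide

set_option maxRecDepth 100000

/-- In `D₁₆⁺ = D₁₆ + ℤ·(1/2)(e₁+⋯+e₁₆)`, every vector of squared length 2
lies in `ℤ¹⁶`; hence the roots of `D₁₆⁺` are exactly the 480 vectors `±e_i ± e_j`, `i < j`. -/
theorem D16plus_roots (D16 L : AddSubgroup (Fin 16 → ℚ))
    (hD16 : (D16 : Set (Fin 16 → ℚ)) =
      {x | (∀ i, ∃ k : ℤ, x i = (k : ℚ)) ∧ ∃ m : ℤ, ∑ i, x i = 2 * (m : ℚ)})
    (hL : L = D16 ⊔ AddSubgroup.closure {fun _ => (1/2 : ℚ)}) :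
    (∀ x ∈ L, ∑ i, x i * x i = 2 → ∀ i, ∃ k : ℤ, x i = (k : ℚ)) ∧
    {x : Fin 16 → ℚ | x ∈ L ∧ ∑ i, x i * x i = 2} =
      {x : Fin 16 → ℚ | ∃ i j : Fin 16, i < j ∧ ∃ a b : ℚ,
        (a = 1 ∨ a = -1) ∧ (b = 1 ∨ b = -1) ∧
        x = a • (Pi.single i (1 : ℚ) : Fin 16 → ℚ) + b • (Pi.single j (1 : ℚ) : Fin 16 → ℚ)} ∧
    Nat.card {x : Fin 16 → ℚ | x ∈ L ∧ ∑ i, x i * x i = 2} = 480 := by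
  -- membership characterization for L
  have hmemL : ∀ x : Fin 16 → ℚ, x ∈ L ↔
      ∃ d ∈ D16, ∃ n : ℤ, d + n • ((fun _ => (1/2 : ℚ)) : Fin 16 → ℚ) = x := by
    intro x
    rw [hL, AddSubgroup.mem_sup]
    constructor
    · rintro ⟨a, ha, b, hb, rfl⟩
      obtain ⟨n, rfl⟩ := AddSubgroup.mem_closure_singleton.1 hb
      exact ⟨a, ha, n, rfl⟩
    · rintro ⟨d, hd, n, rfl⟩
      exact ⟨d, hd, _, AddSubgroup.mem_closure_singleton.2 ⟨n, rfl⟩, rfl⟩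
  -- Part 1: integrality
  have part1 : ∀ x ∈ L, ∑ i, x i * x i = 2 → ∀ i, ∃ k : ℤ, x i = (k : ℚ) := by
    intro x hx hnorm
    obtain ⟨d, hd, n, hxeq⟩ := (hmemL x).1 hx
    have hd' : d ∈ {x : Fin 16 → ℚ | (∀ i, ∃ k : ℤ, x i = (k : ℚ)) ∧
        ∃ m : ℤ, ∑ i, x i = 2 * (m : ℚ)} := by
      rw [← hD16]; exact hd
    obtain ⟨hdint, -⟩ := hd'
    choose k hk using hdint
    have hcoord : ∀ i, x i = (k i : ℚ) + (n : ℚ) / 2 := by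
      intro i
      have h := congrFun hxeq i
      simp only [Pi.add_apply, Pi.smul_apply] at h
      rw [← h, hk i, zsmul_eq_mul]
      ring
    rcases Int.even_or_odd n with ⟨t, ht⟩ | ⟨t, ht⟩
    · intro i
      refine ⟨k i + t, ?_⟩
      rw [hcoord i, ht]
      push_cast
      ring
    · -- odd case: contradiction with norm 2
      exfalso
      have hbig : ∀ i, (1 : ℚ) / 4 ≤ x i * x i := by
        intro i
        rw [hcoord i, ht]
        set c : ℤ := k i + t with hc
        have h1 : (1 : ℤ) ≤ (2 * c + 1) * (2 * c + 1) := by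
          rcases le_or_gt 0 c with h | h <;> nlinarith
        have h1' : (1 : ℚ) ≤ ((2 * c + 1 : ℤ) : ℚ) * ((2 * c + 1 : ℤ) : ℚ) := by
          exact_mod_cast h1
        have heq : (k i : ℚ) + ((2 * t + 1 : ℤ) : ℚ) / 2 = ((2 * c + 1 : ℤ) : ℚ) / 2 := by
          push_cast [hc]; ring
        rw [heq]
        nlinarith [h1']
      have h4 : (4 : ℚ) ≤ ∑ i, x i * x i := by
        calc (4 : ℚ) = ∑ _i : Fin 16, (1 : ℚ) / 4 := by
              rw [Finset.sum_const, Finset.card_univ, Fintype.card_fin]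
              norm_num
        _ ≤ _ := Finset.sum_le_sum (fun i _ => hbig i)
      rw [hnorm] at h4
      linarith
  -- Part 2: set equality
  have part2 : {x : Fin 16 → ℚ | x ∈ L ∧ ∑ i, x i * x i = 2} =
      {x : Fin 16 → ℚ | ∃ i j : Fin 16, i < j ∧ ∃ a b : ℚ,
        (a = 1 ∨ a = -1) ∧ (b = 1 ∨ b = -1) ∧
        x = a • (Pi.single i (1 : ℚ) : Fin 16 → ℚ) + b • (Pi.single j (1 : ℚ) : Fin 16 → ℚ)} := by
    ext x
    simp only [Set.mem_setOf_eq]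
    constructor
    · rintro ⟨hxL, hnorm⟩
      choose k hk using part1 x hxL hnorm
      have hksum : ∑ i, k i * k i = 2 := by
        have : ((∑ i, k i * k i : ℤ) : ℚ) = 2 := by
          push_cast
          rw [← hnorm]
          exact Finset.sum_congr rfl (fun i _ => by rw [hk i])
        exact_mod_cast this
      classical
      set s : Finset (Fin 16) := Finset.univ.filter (fun i => k i ≠ 0) with hs
      have hssum : ∑ i ∈ s, k i * k i = 2 := by
        rw [← hksum]
        refine Finset.sum_subset (Finset.subset_univ s) ?_
        intro i _ hi
        have : k i = 0 := by
          by_contra h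
          exact hi (Finset.mem_filter.2 ⟨Finset.mem_univ i, h⟩)
        simp [this]
      have hone : ∀ i ∈ s, (1 : ℤ) ≤ k i * k i := by
        intro i hi
        have h0 : k i ≠ 0 := (Finset.mem_filter.1 hi).2
        rcases h0.lt_or_gt with h | h <;> nlinarith
      have hcard2 : s.card ≤ 2 := by
        have := Finset.card_nsmul_le_sum s (fun i => k i * k i) 1 hone
        simpa [hssum] using this
      have hcases : s.card = 0 ∨ s.card = 1 ∨ s.card = 2 := by omega
      rcases hcases with h0 | h1 | h2
      · exfalso
        rw [Finset.card_eq_zero] at h0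
        rw [h0] at hssum
        simp at hssum
      · exfalso
        obtain ⟨i, hi⟩ := Finset.card_eq_one.1 h1
        rw [hi] at hssum
        simp only [Finset.sum_singleton] at hssum
        have hle : k i ≤ 1 := by nlinarith [mul_self_nonneg (k i - 1)]
        have hge : -1 ≤ k i := by nlinarith [mul_self_nonneg (k i + 1)]
        interval_cases (k i) <;> omega
      · obtain ⟨i, j, hij, hsij⟩ := Finset.card_eq_two.1 h2
        have hsum2 : k i * k i + k j * k j = 2 := by
          rw [hsij, Finset.sum_insert (by simp [hij]), Finset.sum_singleton] at hssum
          exact hssum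
        have hi' : i ∈ s := by rw [hsij]; simp
        have hj' : j ∈ s := by rw [hsij]; simp
        have hi1 : k i * k i = 1 := by
          have := hone i hi'
          have := hone j hj'
          omega
        have hj1 : k j * k j = 1 := by
          have := hone i hi'
          omega
        have hzero : ∀ m : Fin 16, m ≠ i → m ≠ j → k m = 0 := by
          intro m hmi hmj
          by_contra h
          have hm : m ∈ s := Finset.mem_filter.2 ⟨Finset.mem_univ m, h⟩
          rw [hsij] at hm
          simp at hm
          tauto
        -- build the representation for ordered pair
        have hrep : ∀ (i j : Fin 16), i ≠ j → k i * k i = 1 → k j * k j = 1 →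
            (∀ m : Fin 16, m ≠ i → m ≠ j → k m = 0) →
            ∃ a b : ℚ, (a = 1 ∨ a = -1) ∧ (b = 1 ∨ b = -1) ∧
            x = a • (Pi.single i (1 : ℚ) : Fin 16 → ℚ) +
                b • (Pi.single j (1 : ℚ) : Fin 16 → ℚ) := by
          intro i j hij hi1 hj1 hzero
          refine ⟨(k i : ℚ), (k j : ℚ), ?_, ?_, ?_⟩
          · rcases mul_self_eq_one_iff.1 hi1 with h | h
            · left; rw [h]; norm_num
            · right; rw [h]; norm_num
          · rcases mul_self_eq_one_iff.1 hj1 with h | h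
            · left; rw [h]; norm_num
            · right; rw [h]; norm_num
          · funext m
            rw [D16aux_coord]
            by_cases h : m = i
            · subst h
              rw [if_pos rfl, if_neg hij, hk m, add_zero]
            · by_cases h' : m = j
              · subst h'
                rw [if_neg h, if_pos rfl, hk m, zero_add]
              · rw [if_neg h, if_neg h', hk m, hzero m h h', add_zero]
                norm_num
        rcases lt_or_gt_of_ne hij with hlt | hgt
        · obtain ⟨a, b, ha, hb, hx⟩ := hrep i j hij hi1 hj1 hzero
          exact ⟨i, j, hlt, a, b, ha, hb, hx⟩
        · obtain ⟨a, b, ha, hb, hx⟩ := hrep j i hij.symm hj1 hi1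
            (fun m hmj hmi => hzero m hmi hmj)
          exact ⟨j, i, hgt, a, b, ha, hb, hx⟩
    · rintro ⟨i, j, hij, a, b, ha, hb, rfl⟩
      have hijne : i ≠ j := ne_of_lt hij
      constructor
      · -- membership in L via D16
        have hmem : (a • (Pi.single i (1 : ℚ) : Fin 16 → ℚ) +
            b • (Pi.single j (1 : ℚ) : Fin 16 → ℚ)) ∈ (D16 : Set (Fin 16 → ℚ)) := by
          rw [hD16]
          refine ⟨?_, ?_⟩
          · intro m
            rw [D16aux_coord]
            have e1 : ∃ k1 : ℤ, (if m = i then a else 0) = (k1 : ℚ) := by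
              split
              · rcases ha with rfl | rfl
                exacts [⟨1, by norm_num⟩, ⟨-1, by norm_num⟩]
              · exact ⟨0, by norm_num⟩
            have e2 : ∃ k2 : ℤ, (if m = j then b else 0) = (k2 : ℚ) := by
              split
              · rcases hb with rfl | rfl
                exacts [⟨1, by norm_num⟩, ⟨-1, by norm_num⟩]
              · exact ⟨0, by norm_num⟩
            obtain ⟨k1, h1⟩ := e1
            obtain ⟨k2, h2⟩ := e2
            exact ⟨k1 + k2, by rw [h1, h2]; push_cast; ring⟩
          · rw [D16aux_sumcoord]
            rcases ha with rfl | rfl <;> rcases hb with rfl | rfl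
            exacts [⟨1, by norm_num⟩, ⟨0, by norm_num⟩, ⟨0, by norm_num⟩, ⟨-1, by norm_num⟩]
        rw [hL]
        exact AddSubgroup.mem_sup_left hmem
      · rw [D16aux_sumsq i j hijne]
        rcases ha with rfl | rfl <;> rcases hb with rfl | rfl <;> norm_num
  -- Part 3: cardinality
  refine ⟨part1, part2, ?_⟩
  rw [part2]
  classical
  set f : (Fin 16 × Fin 16) × (ℚ × ℚ) → (Fin 16 → ℚ) :=
    fun p => p.2.1 • (Pi.single p.1.1 (1 : ℚ) : Fin 16 → ℚ) +
             p.2.2 • (Pi.single p.1.2 (1 : ℚ) : Fin 16 → ℚ) with hf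
  set T : Finset ((Fin 16 × Fin 16) × (ℚ × ℚ)) :=
    (Finset.univ.filter (fun p : Fin 16 × Fin 16 => p.1 < p.2)) ×ˢ
      (({1, -1} : Finset ℚ) ×ˢ ({1, -1} : Finset ℚ)) with hT
  have hsetT : {x : Fin 16 → ℚ | ∃ i j : Fin 16, i < j ∧ ∃ a b : ℚ,
        (a = 1 ∨ a = -1) ∧ (b = 1 ∨ b = -1) ∧
        x = a • (Pi.single i (1 : ℚ) : Fin 16 → ℚ) + b • (Pi.single j (1 : ℚ) : Fin 16 → ℚ)}
      = ↑(T.image f) := by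
    ext x
    simp only [Set.mem_setOf_eq, Finset.coe_image, Set.mem_image, Finset.mem_coe,
      Finset.mem_product, Finset.mem_filter, Finset.mem_univ, true_and, Finset.mem_insert,
      Finset.mem_singleton, hT, hf]
    constructor
    · rintro ⟨i, j, hij, a, b, ha, hb, hx⟩
      exact ⟨((i, j), (a, b)), ⟨hij, ha, hb⟩, hx.symm⟩
    · rintro ⟨⟨⟨i, j⟩, ⟨a, b⟩⟩, ⟨hij, ha, hb⟩, hx⟩
      exact ⟨i, j, hij, a, b, ha, hb, hx.symm⟩
  rw [hsetT, Nat.card_coe_set_eq, Set.ncard_coe_finset]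
  have hinj : Set.InjOn f ↑T := by
    rintro ⟨⟨i, j⟩, ⟨a, b⟩⟩ hp ⟨⟨i', j'⟩, ⟨a', b'⟩⟩ hq heq
    simp only [Finset.mem_coe, Finset.mem_product, Finset.mem_filter, Finset.mem_univ, true_and,
      Finset.mem_insert, Finset.mem_singleton, hT] at hp hq
    obtain ⟨hij, ha, hb⟩ := hp
    obtain ⟨hij', ha', hb'⟩ := hq
    have hco : ∀ m, (if m = i then a else 0) + (if m = j then b else 0)
        = (if m = i' then a' else 0) + (if m = j' then b' else 0) := by
      intro m
      have h := congrFun heq m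
      simpa only [hf, D16aux_coord] using h
    have hane : a ≠ 0 := by rcases ha with rfl | rfl <;> norm_num
    have hbne : b ≠ 0 := by rcases hb with rfl | rfl <;> norm_num
    have hane' : a' ≠ 0 := by rcases ha' with rfl | rfl <;> norm_num
    have hbne' : b' ≠ 0 := by rcases hb' with rfl | rfl <;> norm_num
    have hjj' : j' = i ∨ j' = j := by
      by_contra hcon
      push_neg at hcon
      have h := hco j'
      simp [hcon.1, hcon.2, (ne_of_lt hij').symm] at h
      exact hbne' h.symm
    have hii' : i' = i ∨ i' = j := by
      by_contra hcon
      push_neg at hcon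
      have h := hco i'
      simp [hcon.1, hcon.2, ne_of_lt hij'] at h
      exact hane' h.symm
    have hi'i : i' = i := by
      rcases hii' with h | h
      · exact h
      · exfalso
        rcases hjj' with h' | h'
        · rw [h, h'] at hij'
          exact absurd hij (lt_asymm hij')
        · rw [h, h'] at hij'
          exact lt_irrefl _ hij'
    have hj'j : j' = j := by
      rcases hjj' with h' | h'
      · exfalso
        rw [hi'i, h'] at hij'
        exact lt_irrefl _ hij'
      · exact h'
    have haa : a = a' := by
      have h := hco i
      rw [hi'i, hj'j] at h
      simpa [ne_of_lt hij] using h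
    have hbb : b = b' := by
      have h := hco j
      rw [hi'i, hj'j] at h
      simpa [(ne_of_lt hij).symm] using h
    simp [Prod.ext_iff, hi'i, hj'j, haa, hbb]
  rw [Finset.card_image_of_injOn hinj, hT, Finset.card_product, Finset.card_product]
  have hsigns : ({1, -1} : Finset ℚ).card = 2 := by
    rw [Finset.card_insert_of_notMem (by norm_num), Finset.card_singleton]
  rw [D16aux_pairs, hsigns]
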